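/- arXiv:1911.01696 — 6 statements merged into one kernel-verified Lean document; each statement's English description precedes it below -/
import Mathlib

section
/- Gauge invariance of the Weylian affine connection: let U ⊆ ℝⁿ be open, g : U → Matrix (Fin n) (Fin n) ℝ with symmetric invertible values and differentiable at x ∈ U, φ a 1-form on U, and Ω : U → ℝ positive on U and differentiable at x. Define the gauge-transformed pair g̃ = Ω² g and φ̃_ν = φ_ν − Ω⁻¹ ∂_ν Ω. Then for all μ, ν, λ: Γ(g̃, φ̃)^μ_{νλ}(x) = Γ(g, φ)^μ_{νλ}(x); i.e. the Weylian affine connection is invariant under gauge transformations. -/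
open scoped BigOperators
open Matrix

noncomputable section

/-- Euclidean space ℝⁿ. -/
abbrev Euc (n : ℕ) := EuclideanSpace ℝ (Fin n)

/-- Partial derivative of `h` at `x` in the `μ`-th coordinate direction. -/
def pd {n : ℕ} (h : Euc n → ℝ) (μ : Fin n) (x : Euc n) : ℝ :=
  fderiv ℝ h x (EuclideanSpace.single μ 1)

/-- Kronecker delta. -/
def kron {n : ℕ} (i j : Fin n) : ℝ := if i = j then 1 else 0

/-- Levi-Civita Christoffel symbols Γ(g)^μ_{νλ}
    = ½ Σ_α g^{μα} (∂_ν g_{λα} + ∂_λ g_{αν} − ∂_α g_{νλ}). -/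
def christoffel {n : ℕ} (g : Euc n → Matrix (Fin n) (Fin n) ℝ)
    (μ ν l : Fin n) (x : Euc n) : ℝ :=
  (1 / 2) * ∑ α, (g x)⁻¹ μ α *
    (pd (fun y => g y l α) ν x + pd (fun y => g y α ν) l x - pd (fun y => g y ν l) α x)

/-- The Weylian affine connection Γ(g,φ)^μ_{νλ}
    = Γ(g)^μ_{νλ} + δ^μ_ν φ_λ + δ^μ_λ φ_ν − g_{νλ} φ^μ. -/
def weylConn {n : ℕ} (g : Euc n → Matrix (Fin n) (Fin n) ℝ)
    (φ : Fin n → Euc n → ℝ) (μ ν l : Fin n) (x : Euc n) : ℝ :=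
  christoffel g μ ν l x + kron μ ν * φ l x + kron μ l * φ ν x
    - g x ν l * ∑ α, (g x)⁻¹ μ α * φ α x

/-!
The Weyl connection is the Levi-Civita connection plus a term `W(g, φ)` that is linear in `φ`
and unchanged when `g` is rescaled pointwise. Under `g ↦ Ω² g` the Levi-Civita connection
changes by exactly `W(g, dΩ/Ω)`, the classical conformal transformation law, and this is
cancelled by the shift `φ ↦ φ − dΩ/Ω`.
-/

theorem Matrix.inv_smul_of_ne_zero {ι K : Type*} [Fintype ι] [DecidableEq ι] [Field K]
    {A : Matrix ι ι K} (hA : IsUnit A.det) {c : K} (hc : c ≠ 0) : (c • A)⁻¹ = c⁻¹ • A⁻¹ :=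
  Matrix.inv_smul' A (Units.mk0 c hc) hA

namespace Weyl

variable {n : ℕ}

theorem pd_mul {f h : Euc n → ℝ} {x : Euc n} (hf : DifferentiableAt ℝ f x)
    (hh : DifferentiableAt ℝ h x) (κ : Fin n) :
    pd (fun y => f y * h y) κ x = pd f κ x * h x + f x * pd h κ x := by
  simp only [pd, fderiv_fun_mul hf hh, _root_.add_apply, _root_.smul_apply, smul_eq_mul]
  ring

theorem pd_sq_mul {Ω f : Euc n → ℝ} {x : Euc n} (hΩ : DifferentiableAt ℝ Ω x)
    (hf : DifferentiableAt ℝ f x) (κ : Fin n) :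
    pd (fun y => Ω y ^ 2 * f y) κ x = 2 * Ω x * pd Ω κ x * f x + Ω x ^ 2 * pd f κ x := by
  simp only [sq, mul_assoc]
  rw [pd_mul hΩ (hΩ.fun_mul hf), pd_mul hΩ hf]
  ring

theorem inv_mul_apply_eq_kron {A : Matrix (Fin n) (Fin n) ℝ} (hA : IsUnit A.det) (a b : Fin n) :
    ∑ α, A⁻¹ a α * A α b = kron a b := by
  rw [← Matrix.mul_apply, Matrix.nonsing_inv_mul _ hA, Matrix.one_apply, kron]

/-- `W(g, φ)^μ_{νλ} = δ^μ_ν φ_λ + δ^μ_λ φ_ν − g_{νλ} φ^μ`, so that `Γ(g, φ) = Γ(g) + W(g, φ)`. -/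
def weylTerm (g : Euc n → Matrix (Fin n) (Fin n) ℝ) (φ : Fin n → Euc n → ℝ)
    (μ ν l : Fin n) (x : Euc n) : ℝ :=
  kron μ ν * φ l x + kron μ l * φ ν x - g x ν l * ∑ α, (g x)⁻¹ μ α * φ α x

theorem weylConn_eq_christoffel_add_weylTerm (g : Euc n → Matrix (Fin n) (Fin n) ℝ)
    (φ : Fin n → Euc n → ℝ) (μ ν l : Fin n) (x : Euc n) :
    weylConn g φ μ ν l x = christoffel g μ ν l x + weylTerm g φ μ ν l x := by
  rw [weylConn, weylTerm]
  ring

theorem weylTerm_sub (g : Euc n → Matrix (Fin n) (Fin n) ℝ) (φ ψ : Fin n → Euc n → ℝ)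
    (μ ν l : Fin n) (x : Euc n) :
    weylTerm g (fun κ y => φ κ y - ψ κ y) μ ν l x
      = weylTerm g φ μ ν l x - weylTerm g ψ μ ν l x := by
  simp only [weylTerm, mul_sub, Finset.sum_sub_distrib]
  ring

theorem weylTerm_smul_metric {g : Euc n → Matrix (Fin n) (Fin n) ℝ} {c : Euc n → ℝ}
    {x : Euc n} (hg : IsUnit (g x).det) (hc : c x ≠ 0) (φ : Fin n → Euc n → ℝ)
    (μ ν l : Fin n) :
    weylTerm (fun y => c y • g y) φ μ ν l x = weylTerm g φ μ ν l x := by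
  simp only [weylTerm, inv_smul_of_ne_zero hg hc, Matrix.smul_apply, smul_eq_mul, mul_assoc,
    ← Finset.mul_sum]
  field_simp

theorem christoffel_conformal {g : Euc n → Matrix (Fin n) (Fin n) ℝ} {Ω : Euc n → ℝ}
    {x : Euc n} (hsym : (g x)ᵀ = g x) (hg : IsUnit (g x).det)
    (hgdiff : ∀ a b : Fin n, DifferentiableAt ℝ (fun y => g y a b) x)
    (hΩ : Ω x ≠ 0) (hΩdiff : DifferentiableAt ℝ Ω x) (μ ν l : Fin n) :
    christoffel (fun y => Ω y ^ 2 • g y) μ ν l x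
      = christoffel g μ ν l x + weylTerm g (fun κ y => (Ω y)⁻¹ * pd Ω κ y) μ ν l x := by
  simp only [christoffel, weylTerm, Matrix.smul_apply, smul_eq_mul,
    pd_sq_mul hΩdiff (hgdiff _ _), inv_smul_of_ne_zero hg (pow_ne_zero 2 hΩ)]
  rw [← inv_mul_apply_eq_kron hg μ ν, ← inv_mul_apply_eq_kron hg μ l]
  simp only [Finset.mul_sum, Finset.sum_mul, ← Finset.sum_add_distrib, ← Finset.sum_sub_distrib]
  refine Finset.sum_congr rfl fun α _ => ?_
  rw [← Matrix.transpose_apply (g x) α l, hsym]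
  field_simp
  ring

end Weyl

open Weyl in
theorem weylConn_gauge_invariant_general (n : ℕ)
    (U : Set (Euc n)) (x : Euc n) (hx : x ∈ U)
    (g : Euc n → Matrix (Fin n) (Fin n) ℝ)
    (hgsym : ∀ y ∈ U, (g y)ᵀ = g y) (hginv : ∀ y ∈ U, IsUnit (g y))
    (hgdiff : ∀ μ ν : Fin n, DifferentiableAt ℝ (fun y => g y μ ν) x)
    (φ : Fin n → Euc n → ℝ)
    (Ω : Euc n → ℝ) (hΩpos : ∀ y ∈ U, 0 < Ω y) (hΩdiff : DifferentiableAt ℝ Ω x) :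
    ∀ μ ν l : Fin n,
      weylConn (fun y => (Ω y) ^ 2 • g y)
        (fun κ y => φ κ y - (Ω y)⁻¹ * pd Ω κ y) μ ν l x
      = weylConn g φ μ ν l x := by
  intro μ ν l
  have hΩ : Ω x ≠ 0 := (hΩpos x hx).ne'
  have hdet : IsUnit (g x).det := (Matrix.isUnit_iff_isUnit_det _).mp (hginv x hx)
  rw [weylConn_eq_christoffel_add_weylTerm, weylConn_eq_christoffel_add_weylTerm,
    weylTerm_smul_metric hdet (pow_ne_zero 2 hΩ), weylTerm_sub,
    christoffel_conformal (hgsym x hx) hdet hgdiff hΩ hΩdiff]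
  ring

/-- Gauge invariance of the Weylian affine connection:
Γ(Ω²g, φ − dΩ/Ω) = Γ(g, φ). -/
theorem weylConn_gauge_invariant (n : ℕ)
    (U : Set (Euc n)) (hU : IsOpen U) (x : Euc n) (hx : x ∈ U)
    (g : Euc n → Matrix (Fin n) (Fin n) ℝ)
    (hgsym : ∀ y ∈ U, (g y)ᵀ = g y) (hginv : ∀ y ∈ U, IsUnit (g y))
    (hgdiff : ∀ μ ν : Fin n, DifferentiableAt ℝ (fun y => g y μ ν) x)
    (φ : Fin n → Euc n → ℝ)
    (Ω : Euc n → ℝ) (hΩpos : ∀ y ∈ U, 0 < Ω y) (hΩdiff : DifferentiableAt ℝ Ω x) :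
    ∀ μ ν l : Fin n,
      weylConn (fun y => (Ω y) ^ 2 • g y)
        (fun κ y => φ κ y - (Ω y)⁻¹ * pd Ω κ y) μ ν l x
      = weylConn g φ μ ν l x :=
  weylConn_gauge_invariant_general n U x hx g hgsym hginv hgdiff φ Ω hΩpos hΩdiff
end
end

section
/- Algebraic core of Weyl's 1921 theorem: let n ≥ 2, let g be a symmetric invertible real n×n matrix and φ, φ' : Fin n → ℝ two covectors. If there exists ψ : Fin n → ℝ such that for all μ, ν, λ the difference of the scale-connection terms has projective form, Γ(φ)^μ_{νλ} − Γ(φ')^μ_{νλ} = δ^μ_ν ψ_λ + δ^μ_λ ψ_ν, then φ = φ'. (Two Weylian metrics with the same Riemannian component in some gauge and projectively equivalent affine connections are identical.) -/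
/-!
Put `θ = φ - φ'`, `θ^♯ = g⁻¹ θ` and `χ = θ - ψ`; the hypothesis says
`δ^μ_ν χ_λ + δ^μ_λ χ_ν = g_{νλ} θ^μ`. Contracting `μ` with `λ` gives `(n + 1) χ = θ`, and
contracting `ν, λ` against `g^{νλ}` gives `2 χ^♯ = n θ^♯`. Together `(n (n + 1) - 2) θ^♯ = 0`,
and `n (n + 1) ≠ 2` for `n ≥ 2`, so `θ^♯ = 0` and hence `θ = 0`.
-/

open scoped BigOperators
open Matrix

noncomputable section

/-- Scale-connection term Γ(φ)^μ_{νλ} = δ^μ_ν φ_λ + δ^μ_λ φ_ν − g_{νλ} φ^μ,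
with φ^μ = Σ_α (g⁻¹)^{μα} φ_α. -/
def scaleConnTerm {n : ℕ} (g : Matrix (Fin n) (Fin n) ℝ) (φ : Fin n → ℝ)
    (μ ν l : Fin n) : ℝ :=
  kron μ ν * φ l + kron μ l * φ ν - g ν l * ∑ α, g⁻¹ μ α * φ α

open Finset

section

variable {n : ℕ}

lemma sum_kron_mul (j : Fin n) (f : Fin n → ℝ) : ∑ i, kron i j * f i = f j := by
  simp [kron]

lemma sum_kron_mul' (i : Fin n) (f : Fin n → ℝ) : ∑ j, kron i j * f j = f i := by
  simp [kron]

lemma sum_kron_self : ∑ i : Fin n, kron i i = n := by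
  simp [kron]

def projTerm (χ : Fin n → ℝ) (μ ν l : Fin n) : ℝ :=
  kron μ ν * χ l + kron μ l * χ ν

lemma sum_projTerm_diag (χ : Fin n → ℝ) (ν : Fin n) :
    ∑ μ, projTerm χ μ ν μ = (n + 1) * χ ν := by
  simp only [projTerm, sum_add_distrib, sum_kron_mul, ← sum_mul, sum_kron_self]
  ring

lemma sum_sum_mul_projTerm (h : Matrix (Fin n) (Fin n) ℝ) (χ : Fin n → ℝ) (μ : Fin n) :
    ∑ ν, ∑ l, h ν l * projTerm χ μ ν l = (h *ᵥ χ) μ + (hᵀ *ᵥ χ) μ := by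
  simp only [projTerm, mul_add, sum_add_distrib]
  congr 1
  · simp only [mul_left_comm (h _ _), ← mul_sum, sum_kron_mul', mulVec, dotProduct]
  · rw [sum_comm]
    simp only [mul_left_comm (h _ _), ← mul_sum, sum_kron_mul', mulVec, dotProduct,
      transpose_apply]

lemma scaleConnTerm_eq (g : Matrix (Fin n) (Fin n) ℝ) (φ : Fin n → ℝ) (μ ν l : Fin n) :
    scaleConnTerm g φ μ ν l = projTerm φ μ ν l - g ν l * (g⁻¹ *ᵥ φ) μ :=
  rfl

lemma scaleConnTerm_sub (g : Matrix (Fin n) (Fin n) ℝ) (φ φ' : Fin n → ℝ) (μ ν l : Fin n) :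
    scaleConnTerm g φ μ ν l - scaleConnTerm g φ' μ ν l = scaleConnTerm g (φ - φ') μ ν l := by
  simp only [scaleConnTerm_eq, projTerm, mulVec_sub, Pi.sub_apply]
  ring

lemma sum_sum_inv_mul_self {g : Matrix (Fin n) (Fin n) ℝ} (hsym : gᵀ = g) (hinv : IsUnit g) :
    ∑ ν, ∑ l, g⁻¹ ν l * g ν l = n := by
  have hdet := (isUnit_iff_isUnit_det g).mp hinv
  calc ∑ ν, ∑ l, g⁻¹ ν l * g ν l = trace (g⁻¹ * gᵀ) := by simp [trace, mul_apply]
    _ = n := by simp [hsym, nonsing_inv_mul g hdet]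

theorem eq_zero_of_projTerm_eq {g : Matrix (Fin n) (Fin n) ℝ} (hn : 2 ≤ n) (hsym : gᵀ = g)
    (hinv : IsUnit g) {χ u : Fin n → ℝ} (h : ∀ μ ν l, projTerm χ μ ν l = g ν l * u μ) :
    u = 0 := by
  have hdet := (isUnit_iff_isUnit_det g).mp hinv
  have trace_mu_l : ((n : ℝ) + 1) • χ = g *ᵥ u := by
    ext ν
    rw [Pi.smul_apply, smul_eq_mul, ← sum_projTerm_diag]
    simp only [h, mulVec, dotProduct, mul_comm (g _ _)]
  have raised : ((n : ℝ) + 1) • (g⁻¹ *ᵥ χ) = u := by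
    rw [← mulVec_smul, trace_mu_l, mulVec_mulVec, nonsing_inv_mul g hdet, one_mulVec]
  have trace_nu_l : (2 : ℝ) • (g⁻¹ *ᵥ χ) = (n : ℝ) • u := by
    ext μ
    have := sum_sum_mul_projTerm g⁻¹ χ μ
    simp only [h, transpose_nonsing_inv, hsym, ← mul_assoc, ← sum_mul,
      sum_sum_inv_mul_self hsym hinv] at this
    simp only [Pi.smul_apply, smul_eq_mul]
    linarith
  have hcoef : ((n : ℝ) * (n + 1) - 2) • u = 0 := by
    linear_combination (norm := module) (-((n : ℝ) + 1)) • trace_nu_l + (2 : ℝ) • raised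
  have hn' : (2 : ℝ) ≤ n := by exact_mod_cast hn
  exact (smul_eq_zero.mp hcoef).resolve_left (by nlinarith)

end

/-- Algebraic core of Weyl's 1921 theorem: if the difference of the
scale-connection terms of two covectors (with the same symmetric invertible
Riemannian component g) has projective form, then the covectors coincide. -/
theorem weyl1921_algebraic_core (n : ℕ) (hn : 2 ≤ n)
    (g : Matrix (Fin n) (Fin n) ℝ) (hsym : gᵀ = g) (hinv : IsUnit g)
    (φ φ' : Fin n → ℝ)
    (h : ∃ ψ : Fin n → ℝ, ∀ μ ν l : Fin n,
      scaleConnTerm g φ μ ν l - scaleConnTerm g φ' μ ν l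
        = kron μ ν * ψ l + kron μ l * ψ ν) :
    φ = φ' := by
  obtain ⟨ψ, hψ⟩ := h
  have hraised : g⁻¹ *ᵥ (φ - φ') = 0 := by
    refine eq_zero_of_projTerm_eq hn hsym hinv (χ := φ - φ' - ψ) fun μ ν l => ?_
    have := hψ μ ν l
    rw [scaleConnTerm_sub, scaleConnTerm_eq] at this
    simp only [projTerm, Pi.sub_apply] at this ⊢
    linarith
  have hdet := (isUnit_iff_isUnit_det g).mp hinv
  rw [← sub_eq_zero, ← one_mulVec (φ - φ'), ← mul_nonsing_inv g hdet, ← mulVec_mulVec,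
    hraised, mulVec_zero]
end
end

section
/- Weyl's theorem (1921): a Weylian metric is uniquely determined by its projective and conformal structures. Precisely: let n ≥ 2, U ⊆ ℝⁿ open, g : U → Matrix (Fin n) (Fin n) ℝ differentiable with symmetric invertible values, Ω : U → ℝ positive and differentiable, and φ, φ̃ two 1-forms on U. If at every point x ∈ U the affine connections of the two Weylian metrics represented by (g, φ) and (Ω² g, φ̃) are projectively equivalent, i.e. there exists ψ : Fin n → ℝ (depending on x) with Γ(Ω²g, φ̃)^μ_{νλ}(x) − Γ(g, φ)^μ_{νλ}(x) = δ^μ_ν ψ_λ + δ^μ_λ ψ_ν for all μ, ν, λ, then φ̃_ν(x) = φ_ν(x) − Ω(x)⁻¹ ∂_ν Ω(x) for all x ∈ U and all ν; that is, (Ω² g, φ̃) is exactly the gauge transform of (g, φ) by Ω, so the two gauges determine the same Weylian metric. -/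
/-!
Both the 1-form part of a Weyl connection and the change of the Levi-Civita symbols under
`g ↦ Ω²g` have the shape `S(θ)^μ_{νλ} = δ^μ_ν θ_λ + δ^μ_λ θ_ν - g_{νλ} θ^μ`, and `S` does not
change when `g` is rescaled. Hence `Γ(Ω²g, φ̃) - Γ(g, φ) = S(θ)` with `θ = φ̃ - φ + dΩ/Ω`.
If `S(θ) = δ^μ_ν ψ_λ + δ^μ_λ ψ_ν`, then with `c = θ - ψ` the trace over `μ = ν` gives
`θ = (n + 1) c`, and contracting `ν, λ` with `g⁻¹` gives `2 c^μ = n θ^μ`. Together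
`(n + 2)(n - 1) c = 0`, so for `n ≥ 2` both `c` and `θ` vanish.
-/

open scoped BigOperators
open Matrix

noncomputable section

open Finset

lemma one_apply_eq_kron {n : ℕ} (i j : Fin n) : (1 : Matrix (Fin n) (Fin n) ℝ) i j = kron i j :=
  Matrix.one_apply

lemma pd_sq_mul {n : ℕ} {Ω f : Euc n → ℝ} {x : Euc n} (hΩ : DifferentiableAt ℝ Ω x)
    (hf : DifferentiableAt ℝ f x) (ν : Fin n) :
    pd (fun y => Ω y ^ 2 * f y) ν x = Ω x ^ 2 * pd f ν x + 2 * Ω x * pd Ω ν x * f x := by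
  unfold pd
  rw [fderiv_fun_mul (c := fun y => Ω y ^ 2) (hΩ.pow 2) hf, fderiv_fun_pow 2 hΩ]
  simp only [Nat.add_one_sub_one, pow_one, nsmul_eq_mul, Nat.cast_ofNat, _root_.add_apply,
    _root_.smul_apply, smul_eq_mul]
  ring

def weylShift {n : ℕ} (G : Matrix (Fin n) (Fin n) ℝ) (θ : Fin n → ℝ) (μ ν l : Fin n) : ℝ :=
  kron μ ν * θ l + kron μ l * θ ν - G ν l * (G⁻¹ *ᵥ θ) μ

section weylShift

variable {n : ℕ} {G : Matrix (Fin n) (Fin n) ℝ} {θ θ' : Fin n → ℝ} {μ ν l : Fin n}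

lemma weylShift_add : weylShift G (θ + θ') μ ν l = weylShift G θ μ ν l + weylShift G θ' μ ν l := by
  simp only [weylShift, mulVec_add, Pi.add_apply]
  ring

lemma weylShift_sub : weylShift G (θ - θ') μ ν l = weylShift G θ μ ν l - weylShift G θ' μ ν l := by
  simp only [weylShift, mulVec_sub, Pi.sub_apply]
  ring

lemma weylShift_smul_left {c : ℝ} (hc : c ≠ 0) (hG : IsUnit G) :
    weylShift (c • G) θ μ ν l = weylShift G θ μ ν l := by
  have hinv : (c • G)⁻¹ = c⁻¹ • G⁻¹ :=
    inv_smul' G (Units.mk0 c hc) ((isUnit_iff_isUnit_det G).mp hG)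
  simp only [weylShift, hinv, smul_mulVec, Matrix.smul_apply, smul_eq_mul, Pi.smul_apply]
  field_simp

end weylShift

lemma weylConn_eq_christoffel_add_weylShift {n : ℕ} (g : Euc n → Matrix (Fin n) (Fin n) ℝ)
    (φ : Fin n → Euc n → ℝ) (μ ν l : Fin n) (x : Euc n) :
    weylConn g φ μ ν l x = christoffel g μ ν l x + weylShift (g x) (fun α => φ α x) μ ν l := by
  simp only [weylConn, weylShift, mulVec, dotProduct]
  ring

lemma christoffel_conformal {n : ℕ} {g : Euc n → Matrix (Fin n) (Fin n) ℝ} {Ω : Euc n → ℝ}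
    {x : Euc n} (hsym : (g x).IsSymm) (hinv : IsUnit (g x))
    (hg : ∀ α β, DifferentiableAt ℝ (fun y => g y α β) x) (hΩ : DifferentiableAt ℝ Ω x)
    (hΩ0 : Ω x ≠ 0) (μ ν l : Fin n) :
    christoffel (fun y => Ω y ^ 2 • g y) μ ν l x
      = christoffel g μ ν l x + weylShift (g x) (fun α => (Ω x)⁻¹ * pd Ω α x) μ ν l := by
  have hdet := (isUnit_iff_isUnit_det (g x)).mp hinv
  have hinv2 : (Ω x ^ 2 • g x)⁻¹ = (Ω x ^ 2)⁻¹ • (g x)⁻¹ :=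
    inv_smul' (g x) (Units.mk0 _ (pow_ne_zero 2 hΩ0)) hdet
  have hcontr : ∀ β γ, kron β γ = ∑ α, (g x)⁻¹ β α * g x α γ := fun β γ => by
    rw [← Matrix.mul_apply, nonsing_inv_mul _ hdet, one_apply_eq_kron]
  simp only [christoffel, weylShift, Matrix.smul_apply, smul_eq_mul, hinv2, pd_sq_mul hΩ (hg _ _)]
  rw [hcontr μ ν, hcontr μ l]
  simp only [mulVec, dotProduct, mul_sum, sum_mul, ← sum_add_distrib, ← sum_sub_distrib]
  refine sum_congr rfl fun α _ => ?_
  rw [hsym.apply l α]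
  field_simp
  ring

lemma weylConn_conformal_sub {n : ℕ} {g : Euc n → Matrix (Fin n) (Fin n) ℝ} {Ω : Euc n → ℝ}
    {x : Euc n} (hsym : (g x).IsSymm) (hinv : IsUnit (g x))
    (hg : ∀ α β, DifferentiableAt ℝ (fun y => g y α β) x) (hΩ : DifferentiableAt ℝ Ω x)
    (hΩ0 : Ω x ≠ 0) (φ φt : Fin n → Euc n → ℝ) (μ ν l : Fin n) :
    weylConn (fun y => Ω y ^ 2 • g y) φt μ ν l x - weylConn g φ μ ν l x
      = weylShift (g x) (fun α => φt α x - φ α x + (Ω x)⁻¹ * pd Ω α x) μ ν l := by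
  have hsplit : (fun α => φt α x - φ α x + (Ω x)⁻¹ * pd Ω α x)
      = ((fun α => φt α x) - fun α => φ α x) + fun α => (Ω x)⁻¹ * pd Ω α x := rfl
  rw [weylConn_eq_christoffel_add_weylShift, weylConn_eq_christoffel_add_weylShift,
    christoffel_conformal hsym hinv hg hΩ hΩ0, weylShift_smul_left (pow_ne_zero 2 hΩ0) hinv,
    hsplit, weylShift_add, weylShift_sub]
  ring

lemma sum_sum_nonsing_inv_mul_self {n : ℕ} {G : Matrix (Fin n) (Fin n) ℝ} (hG : IsUnit G.det) :
    ∑ ν, ∑ l, G⁻¹ l ν * G ν l = n := by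
  rw [sum_comm]
  simp_rw [← Matrix.mul_apply, nonsing_inv_mul _ hG, one_apply_eq_kron, kron]
  simp

theorem eq_zero_of_weylShift_eq_projective {n : ℕ} (hn : n ≠ 1) {G : Matrix (Fin n) (Fin n) ℝ}
    (hG : G.IsSymm) (hGinv : IsUnit G) {θ ψ : Fin n → ℝ}
    (h : ∀ μ ν l, weylShift G θ μ ν l = kron μ ν * ψ l + kron μ l * ψ ν) : θ = 0 := by
  have hdet := (isUnit_iff_isUnit_det G).mp hGinv
  set c := θ - ψ with hc_def
  have hc : ∀ μ ν l, kron μ ν * c l + kron μ l * c ν = G ν l * (G⁻¹ *ᵥ θ) μ := fun μ ν l => by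
    have := h μ ν l
    simp only [weylShift] at this
    simp only [hc_def, Pi.sub_apply]
    linarith
  have hθ : θ = ((n : ℝ) + 1) • c := by
    funext l
    have hsum := sum_congr rfl fun ν (_ : ν ∈ univ) => hc ν ν l
    have hlower : ∑ ν, G ν l * (G⁻¹ *ᵥ θ) ν = θ l := by
      calc ∑ ν, G ν l * (G⁻¹ *ᵥ θ) ν = (G *ᵥ (G⁻¹ *ᵥ θ)) l :=
            sum_congr rfl fun ν _ => by rw [hG.apply]
        _ = θ l := by rw [mulVec_mulVec, mul_nonsing_inv _ hdet, one_mulVec]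
    simp only [kron, if_true, ite_mul, one_mul, zero_mul, sum_add_distrib, sum_const, card_univ,
      Fintype.card_fin, nsmul_eq_mul, sum_ite_eq', mem_univ, hlower] at hsum
    simp only [Pi.smul_apply, smul_eq_mul]
    linarith
  have hcontract : (2 : ℝ) • (G⁻¹ *ᵥ c) = (n : ℝ) • (G⁻¹ *ᵥ θ) := by
    funext μ
    have hsum := sum_congr rfl fun ν (_ : ν ∈ univ) => sum_congr rfl fun l (_ : l ∈ univ) =>
      congrArg (G⁻¹ l ν * ·) (hc μ ν l)
    simp only [kron, ite_mul, one_mul, zero_mul, mul_add, mul_ite, mul_zero, sum_add_distrib,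
      sum_ite_irrel, sum_const_zero, sum_ite_eq, mem_univ, ↓reduceIte, ← mul_assoc, ← sum_mul,
      sum_sum_nonsing_inv_mul_self hdet] at hsum
    have hsymm : ∑ x, G⁻¹ x μ * c x = ∑ x, G⁻¹ μ x * c x :=
      sum_congr rfl fun x _ => by rw [hG.inv.apply]
    simp only [hsymm, Pi.smul_apply, smul_eq_mul, mulVec, dotProduct] at hsum ⊢
    linarith
  have hc_raised : G⁻¹ *ᵥ c = 0 := by
    have hcoef : (n : ℝ) * (n + 1) - 2 ≠ 0 := by
      have hn' : (n : ℝ) - 1 ≠ 0 := sub_ne_zero.mpr (by exact_mod_cast hn)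
      rw [show (n : ℝ) * (n + 1) - 2 = (n + 2) * (n - 1) by ring]
      exact mul_ne_zero (by positivity) hn'
    have : ((n : ℝ) * (n + 1) - 2) • (G⁻¹ *ᵥ c) = 0 := by
      rw [sub_smul, mul_smul, ← mulVec_smul, ← hθ, ← hcontract, sub_self]
    exact (smul_eq_zero.mp this).resolve_left hcoef
  have hc0 : c = 0 := by
    rw [← one_mulVec c, ← mul_nonsing_inv _ hdet, ← mulVec_mulVec, hc_raised, mulVec_zero]
  rw [hθ, hc0, smul_zero]

theorem weyl1921_projective_conformal_determine_metric_general (n : ℕ) (hn : 2 ≤ n)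
    (U : Set (Euc n))
    (g : Euc n → Matrix (Fin n) (Fin n) ℝ)
    (hgsym : ∀ y ∈ U, (g y)ᵀ = g y) (hginv : ∀ y ∈ U, IsUnit (g y))
    (hgdiff : ∀ μ ν : Fin n, ∀ y ∈ U, DifferentiableAt ℝ (fun z => g z μ ν) y)
    (Ω : Euc n → ℝ) (hΩpos : ∀ y ∈ U, 0 < Ω y)
    (hΩdiff : ∀ y ∈ U, DifferentiableAt ℝ Ω y)
    (φ φt : Fin n → Euc n → ℝ)
    (hproj : ∀ x ∈ U, ∃ ψ : Fin n → ℝ, ∀ μ ν l : Fin n,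
      weylConn (fun y => (Ω y) ^ 2 • g y) φt μ ν l x - weylConn g φ μ ν l x
        = kron μ ν * ψ l + kron μ l * ψ ν) :
    ∀ x ∈ U, ∀ ν : Fin n, φt ν x = φ ν x - (Ω x)⁻¹ * pd Ω ν x := by
  intro x hx ν
  obtain ⟨ψ, hψ⟩ := hproj x hx
  have hθ : (fun α => φt α x - φ α x + (Ω x)⁻¹ * pd Ω α x) = 0 :=
    eq_zero_of_weylShift_eq_projective (by omega) (hgsym x hx) (hginv x hx) fun μ ν l => by
      rw [← weylConn_conformal_sub (hgsym x hx) (hginv x hx) (fun α β => hgdiff α β x hx)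
        (hΩdiff x hx) (hΩpos x hx).ne', hψ]
  linarith [show φt ν x - φ ν x + (Ω x)⁻¹ * pd Ω ν x = 0 from congrFun hθ ν]

/-- Weyl's theorem (1921): a Weylian metric is uniquely determined by its
projective and conformal structures. If the affine connections of the gauges
(g, φ) and (Ω²g, φ̃) are projectively equivalent at every point of U, then
(Ω²g, φ̃) is exactly the gauge transform of (g, φ) by Ω. -/
theorem weyl1921_projective_conformal_determine_metric (n : ℕ) (hn : 2 ≤ n)
    (U : Set (Euc n)) (hU : IsOpen U)
    (g : Euc n → Matrix (Fin n) (Fin n) ℝ)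
    (hgsym : ∀ y ∈ U, (g y)ᵀ = g y) (hginv : ∀ y ∈ U, IsUnit (g y))
    (hgdiff : ∀ μ ν : Fin n, ∀ y ∈ U, DifferentiableAt ℝ (fun z => g z μ ν) y)
    (Ω : Euc n → ℝ) (hΩpos : ∀ y ∈ U, 0 < Ω y)
    (hΩdiff : ∀ y ∈ U, DifferentiableAt ℝ Ω y)
    (φ φt : Fin n → Euc n → ℝ)
    (hproj : ∀ x ∈ U, ∃ ψ : Fin n → ℝ, ∀ μ ν l : Fin n,
      weylConn (fun y => (Ω y) ^ 2 • g y) φt μ ν l x - weylConn g φ μ ν l x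
        = kron μ ν * ψ l + kron μ l * ψ ν) :
    ∀ x ∈ U, ∀ ν : Fin n, φt ν x = φ ν x - (Ω x)⁻¹ * pd Ω ν x :=
  weyl1921_projective_conformal_determine_metric_general n hn U g hgsym hginv hgdiff Ω hΩpos hΩdiff
    φ φt hproj
end
end

section
/- Let V be a finite-dimensional real vector space with dim V ≥ 2 and let B : V → V → ℝ be a symmetric nondegenerate bilinear form. If v ∈ V is such that for every ξ ∈ V the vector B(ξ, ξ) • v is a scalar multiple of ξ (i.e. ∀ ξ, ∃ c : ℝ, B(ξ, ξ) • v = c • ξ), then v = 0. (This is the key lemma in Weyl's proof that projective and conformal structure determine the Weylian metric.) -/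
/-!
If `v ≠ 0`, then for every `ξ` off the line `ℝ ∙ v` the vectors `v, ξ` are independent, so
`B(ξ, ξ) • v = c • ξ` forces `B(ξ, ξ) = 0`. When `dim V ≥ 2` that line is a proper subspace, and
the parallelogram law `Q(ξ + w) + Q(ξ - w) = 2 Q(ξ) + 2 Q(w)` with `w` off the line spreads the
vanishing of `Q(ξ) = B(ξ, ξ)` to the line itself. A symmetric form with vanishing diagonal is zero
by polarization, contradicting nondegeneracy.
-/

namespace LinearMap.BilinForm

variable {K V : Type*} [Field K] [NeZero (2 : K)] [AddCommGroup V] [Module K V]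

theorem self_eq_zero_of_forall_notMem {B : LinearMap.BilinForm K V} {W : Submodule K V}
    (hW : W ≠ ⊤) (h : ∀ x ∉ W, B x x = 0) (x : V) : B x x = 0 := by
  by_cases hx : x ∈ W
  swap
  · exact h x hx
  obtain ⟨w, -, hw⟩ := SetLike.exists_of_lt hW.lt_top
  have hadd : B (x + w) (x + w) = 0 := h _ fun hmem => hw ((W.add_mem_iff_right hx).1 hmem)
  have hsub : B (x - w) (x - w) = 0 := h _ fun hmem => hw ((W.sub_mem_iff_right hx).1 hmem)
  have parallelogram :
      B (x + w) (x + w) + B (x - w) (x - w) = 2 * (B x x + B w w) := by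
    simp only [map_add, map_sub, LinearMap.add_apply, LinearMap.sub_apply]
    ring
  rw [hadd, hsub, h w hw] at parallelogram
  simpa [two_ne_zero] using parallelogram

end LinearMap.BilinForm

theorem weyl_projective_key_lemma_general (V : Type*) [AddCommGroup V] [Module ℝ V]
    (hdim : 2 ≤ Module.finrank ℝ V)
    (B : LinearMap.BilinForm ℝ V)
    (hsymm : ∀ x y : V, B x y = B y x)
    (hnd : ∀ x : V, (∀ y : V, B x y = 0) → x = 0)
    (v : V) (h : ∀ ξ : V, ∃ c : ℝ, B ξ ξ • v = c • ξ) :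
    v = 0 := by
  by_contra hv
  have hline : ℝ ∙ v ≠ ⊤ := (span_lt_top_of_card_lt_finrank <| by
    rw [Set.toFinset_singleton, Finset.card_singleton]; omega).ne
  have hoff : ∀ ξ ∉ ℝ ∙ v, B ξ ξ = 0 := by
    intro ξ hξ
    obtain ⟨c, hc⟩ := h ξ
    have hind : LinearIndependent ℝ ![v, ξ] :=
      (LinearIndependent.pair_iff' hv).2 fun a ha => hξ (Submodule.mem_span_singleton.2 ⟨a, ha⟩)
    exact (LinearIndependent.pair_iff.1 hind _ (-c) (by rw [hc, neg_smul, add_neg_cancel])).1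
  have hB : B = 0 := LinearMap.BilinForm.ext_of_isSymm ⟨hsymm⟩ LinearMap.BilinForm.isSymm_zero
    (LinearMap.BilinForm.self_eq_zero_of_forall_notMem hline hoff)
  exact hv (hnd v fun y => by simp [hB])

/-- Key lemma in Weyl's proof that projective and conformal structure determine
the Weylian metric: if B is a symmetric nondegenerate bilinear form on a real
vector space of dimension ≥ 2 and B(ξ,ξ) • v is always a scalar multiple of ξ,
then v = 0. -/
theorem weyl_projective_key_lemma (V : Type*) [AddCommGroup V] [Module ℝ V]
    [FiniteDimensional ℝ V] (hdim : 2 ≤ Module.finrank ℝ V)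
    (B : LinearMap.BilinForm ℝ V)
    (hsymm : ∀ x y : V, B x y = B y x)
    (hnd : ∀ x : V, (∀ y : V, B x y = 0) → x = 0)
    (v : V) (h : ∀ ξ : V, ∃ c : ℝ, B ξ ξ • v = c • ξ) :
    v = 0 :=
  weyl_projective_key_lemma_general V hdim B hsymm hnd v h
end

section
/- Constancy of the length function along scale-covariant geodesics: let U ⊆ ℝⁿ be open, g : U → Matrix (Fin n) (Fin n) ℝ differentiable with symmetric invertible values, φ a 1-form on U, and let γ be a twice differentiable curve defined on an open interval I ⊆ ℝ with γ(I) ⊆ U. Suppose γ satisfies the scale-covariant geodesic equation: for all t ∈ I and all λ, γ̈^λ(t) + Σ_{μ,ν} Γ(g,φ)^λ_{μν}(γ(t)) γ̇^μ(t) γ̇^ν(t) − (Σ_ν φ_ν(γ(t)) γ̇^ν(t)) γ̇^λ(t) = 0. Then the length function t ↦ Σ_{μ,ν} g_{μν}(γ(t)) γ̇^μ(t) γ̇^ν(t) is constant on I. -/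
open scoped BigOperators
open Matrix

noncomputable section

/-!
Along γ, the length L = g_{μν} γ̇^μ γ̇^ν has derivative
L' = ∂_α g_{μν} γ̇^α γ̇^μ γ̇^ν + 2 g_{μν} γ̇^μ γ̈^ν, by the symmetry of g.
Lowering the index of the geodesic equation with g turns γ̈ into the lowered Weyl connection
contracted with γ̇ γ̇. Contracting once more with γ̇, each of the three Levi-Civita terms is the
cubic term S = ∂_α g_{μν} γ̇^α γ̇^μ γ̇^ν up to relabelling, so they contribute (S + S - S)/2,
and the three Weyl terms contribute (1 + 1 - 1) (φ·γ̇) L, which cancels against the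
reparametrisation term -(φ·γ̇) γ̇. Hence g_{μν} γ̇^μ γ̈^ν = -S/2, so L' = 0.
-/

open Finset

variable {n : ℕ}

theorem fderiv_apply_eq_sum_pd (h : Euc n → ℝ) (x v : Euc n) :
    fderiv ℝ h x v = ∑ α, v α * pd h α x := by
  conv_lhs => rw [← (EuclideanSpace.basisFun (Fin n) ℝ).sum_repr v]
  simp [pd]

theorem hasDerivAt_comp_curve {h : Euc n → ℝ} {γ : ℝ → Euc n} {t : ℝ}
    (hh : DifferentiableAt ℝ h (γ t)) (hγ : ∀ μ, DifferentiableAt ℝ (fun s => γ s μ) t) :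
    HasDerivAt (fun s => h (γ s)) (∑ α, deriv (fun s => γ s α) t * pd h α (γ t)) t := by
  have hγ' := ((differentiableAt_piLp 2).2 hγ).hasDerivAt
  have hcoord : ∀ α, deriv (fun s => γ s α) t = deriv γ t α := fun α =>
    ((PiLp.hasFDerivAt_apply 2 (γ t) α).comp_hasDerivAt t hγ').deriv
  have hcomp := hh.hasFDerivAt.comp_hasDerivAt t hγ'
  rw [fderiv_apply_eq_sum_pd] at hcomp
  simp only [← hcoord] at hcomp
  exact hcomp

theorem hasDerivAt_sum_metric_mul_mul {g : Euc n → Matrix (Fin n) (Fin n) ℝ} {γ : ℝ → Euc n}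
    {v w : Fin n → ℝ → ℝ} {v' w' : Fin n → ℝ} {t : ℝ}
    (hg : ∀ μ ν, DifferentiableAt ℝ (fun z => g z μ ν) (γ t))
    (hγ : ∀ μ, DifferentiableAt ℝ (fun s => γ s μ) t)
    (hv : ∀ μ, HasDerivAt (v μ) (v' μ) t) (hw : ∀ μ, HasDerivAt (w μ) (w' μ) t) :
    HasDerivAt (fun s => ∑ μ, ∑ ν, g (γ s) μ ν * v μ s * w ν s)
      (∑ μ, ∑ ν, ((∑ α, deriv (fun s => γ s α) t * pd (fun z => g z μ ν) α (γ t)) * v μ t * w ν t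
        + g (γ t) μ ν * v' μ * w ν t + g (γ t) μ ν * v μ t * w' ν)) t :=
  HasDerivAt.fun_sum fun μ _ => HasDerivAt.fun_sum fun ν _ =>
    (((hasDerivAt_comp_curve (hg μ ν) hγ).fun_mul (hv μ)).fun_mul (hw ν)).congr_deriv (by ring)

theorem sum_comm_cyclic {ι κ ρ M : Type*} [Fintype ι] [Fintype κ] [Fintype ρ] [AddCommMonoid M]
    (f : ι → κ → ρ → M) : ∑ i, ∑ j, ∑ k, f i j k = ∑ k, ∑ i, ∑ j, f i j k :=
  (sum_congr rfl fun _ _ => sum_comm).trans sum_comm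

theorem sum_mul_weylConn {g : Euc n → Matrix (Fin n) (Fin n) ℝ} {φ : Fin n → Euc n → ℝ}
    {y : Euc n} (hg : IsUnit (g y)) (κ ν l : Fin n) :
    ∑ μ, g y κ μ * weylConn g φ μ ν l y =
      (pd (fun z => g z l κ) ν y + pd (fun z => g z κ ν) l y - pd (fun z => g z ν l) κ y) / 2
        + g y κ ν * φ l y + g y κ l * φ ν y - g y ν l * φ κ y := by
  have hlower : ∀ X : Fin n → ℝ, ∑ μ, g y κ μ * ∑ α, (g y)⁻¹ μ α * X α = X κ := fun X => by
    change (g y *ᵥ ((g y)⁻¹ *ᵥ X)) κ = X κ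
    rw [Matrix.mulVec_mulVec, Matrix.mul_nonsing_inv _ ((g y).isUnit_iff_isUnit_det.1 hg),
      Matrix.one_mulVec]
  simp only [weylConn, christoffel, kron, mul_add, mul_sub, sum_add_distrib, sum_sub_distrib,
    mul_left_comm _ (1 / 2 : ℝ), mul_left_comm _ (g y ν l), ← mul_sum, hlower]
  simp only [ite_mul, one_mul, zero_mul, mul_ite, mul_zero, sum_ite_eq', mem_univ, if_true]
  ring

theorem contract_sum_mul_weylConn {g : Euc n → Matrix (Fin n) (Fin n) ℝ}
    {φ : Fin n → Euc n → ℝ} {y : Euc n} (hg : IsUnit (g y)) (D : Fin n → ℝ) :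
    ∑ κ, ∑ ν, ∑ l, D κ * D ν * D l * ∑ μ, g y κ μ * weylConn g φ μ ν l y =
      (∑ a, ∑ b, ∑ c, D a * D b * D c * pd (fun z => g z a b) c y) / 2
        + (∑ ν, φ ν y * D ν) * ∑ μ, ∑ ν, g y μ ν * D μ * D ν := by
  set P : Fin n → Fin n → Fin n → ℝ := fun a b c => pd (fun z => g z a b) c y
  set S := ∑ a, ∑ b, ∑ c, D a * D b * D c * P a b c
  have hlevi : ∑ κ, ∑ ν, ∑ l, D κ * D ν * D l * P l κ ν = S := by
    rw [sum_comm_cyclic]; simp only [S]; congr! 3; ring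
  have hlevi' : ∑ κ, ∑ ν, ∑ l, D κ * D ν * D l * P ν l κ = S := by
    rw [← sum_comm_cyclic (fun ν l κ => D κ * D ν * D l * P ν l κ)]; simp only [S]; congr! 3; ring
  have hswap : ∑ κ, ∑ ν, ∑ l, D κ * D ν * D l * (g y κ l * φ ν y)
      = ∑ κ, ∑ ν, ∑ l, D κ * D ν * D l * (g y κ ν * φ l y) := by
    congr! 1; rw [sum_comm]; congr! 2; ring
  have hweyl : ∑ κ, ∑ ν, ∑ l, D κ * D ν * D l * (g y κ ν * φ l y)
      = (∑ ν, φ ν y * D ν) * ∑ μ, ∑ ν, g y μ ν * D μ * D ν := by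
    rw [mul_comm, sum_mul]; refine sum_congr rfl fun κ _ => ?_
    rw [sum_mul]; refine sum_congr rfl fun ν _ => ?_
    rw [mul_sum]; exact sum_congr rfl fun l _ => by ring
  have hweyl' : ∑ κ, ∑ ν, ∑ l, D κ * D ν * D l * (g y ν l * φ κ y)
      = (∑ ν, φ ν y * D ν) * ∑ μ, ∑ ν, g y μ ν * D μ * D ν := by
    rw [sum_mul]; refine sum_congr rfl fun κ _ => ?_
    rw [mul_sum]; refine sum_congr rfl fun ν _ => ?_
    rw [mul_sum]; exact sum_congr rfl fun l _ => by ring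
  simp only [sum_mul_weylConn hg, add_div, sub_div, mul_add, mul_sub, sum_add_distrib,
    sum_sub_distrib, ← mul_div_assoc, ← sum_div]
  rw [hlevi, hlevi', hswap, hweyl, hweyl']
  ring

theorem sum_deriv_length_eq_zero_of_geodesic {g : Euc n → Matrix (Fin n) (Fin n) ℝ}
    {φ : Fin n → Euc n → ℝ} {y : Euc n} (hsym : (g y).IsSymm) (hg : IsUnit (g y))
    (D A : Fin n → ℝ)
    (hgeo : ∀ l, A l + ∑ μ, ∑ ν, weylConn g φ l μ ν y * D μ * D ν
      - (∑ ν, φ ν y * D ν) * D l = 0) :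
    ∑ μ, ∑ ν, ((∑ α, D α * pd (fun z => g z μ ν) α y) * D μ * D ν
      + g y μ ν * A μ * D ν + g y μ ν * D μ * A ν) = 0 := by
  set F := ∑ ν, φ ν y * D ν
  set L := ∑ μ, ∑ ν, g y μ ν * D μ * D ν
  set S := ∑ a, ∑ b, ∑ c, D a * D b * D c * pd (fun z => g z a b) c y
  have hS : ∑ μ, ∑ ν, (∑ α, D α * pd (fun z => g z μ ν) α y) * D μ * D ν = S := by
    refine sum_congr rfl fun μ _ => sum_congr rfl fun ν _ => ?_
    rw [sum_mul, sum_mul]; exact sum_congr rfl fun α _ => by ring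
  have hswap : ∑ μ, ∑ ν, g y μ ν * A μ * D ν = ∑ μ, ∑ ν, g y μ ν * D μ * A ν := by
    rw [sum_comm]; exact sum_congr rfl fun μ _ => sum_congr rfl fun ν _ => by
      rw [hsym.apply μ ν]; ring
  have hGA : ∑ μ, ∑ ν, g y μ ν * D μ * A ν = -(S / 2) := by
    have hA : ∀ l, A l = F * D l - ∑ μ, ∑ ν, weylConn g φ l μ ν y * D μ * D ν :=
      fun l => by linarith [hgeo l]
    calc ∑ μ, ∑ ν, g y μ ν * D μ * A ν
        = F * L - ∑ κ, ∑ ν, ∑ l, D κ * D ν * D l * ∑ μ, g y κ μ * weylConn g φ μ ν l y := by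
          simp only [hA, mul_sub, sum_sub_distrib, mul_sum]
          congr 1
          · rw [mul_sum]; refine sum_congr rfl fun μ _ => ?_
            rw [mul_sum]; exact sum_congr rfl fun ν _ => by ring
          · refine sum_congr rfl fun κ _ => ?_
            rw [← sum_comm_cyclic]; congr! 3; ring
      _ = -(S / 2) := by rw [contract_sum_mul_weylConn hg]; ring
  simp only [sum_add_distrib]
  rw [hS, hswap, hGA]
  ring

theorem length_constant_along_scale_covariant_geodesic_general (n : ℕ)
    (U : Set (Euc n))
    (g : Euc n → Matrix (Fin n) (Fin n) ℝ)
    (hgsym : ∀ y ∈ U, (g y)ᵀ = g y) (hginv : ∀ y ∈ U, IsUnit (g y))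
    (hgdiff : ∀ μ ν : Fin n, ∀ y ∈ U, DifferentiableAt ℝ (fun z => g z μ ν) y)
    (φ : Fin n → Euc n → ℝ)
    (a b : ℝ) (γ : ℝ → Euc n)
    (hγU : ∀ t ∈ Set.Ioo a b, γ t ∈ U)
    (hγdiff : ∀ μ : Fin n, ∀ t ∈ Set.Ioo a b,
      DifferentiableAt ℝ (fun s => γ s μ) t ∧
      DifferentiableAt ℝ (deriv (fun s => γ s μ)) t)
    (hgeo : ∀ t ∈ Set.Ioo a b, ∀ l : Fin n,
      deriv (deriv (fun s => γ s l)) t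
        + (∑ μ, ∑ ν, weylConn g φ l μ ν (γ t)
            * deriv (fun s => γ s μ) t * deriv (fun s => γ s ν) t)
        - (∑ ν, φ ν (γ t) * deriv (fun s => γ s ν) t)
            * deriv (fun s => γ s l) t = 0) :
    ∀ t₁ ∈ Set.Ioo a b, ∀ t₂ ∈ Set.Ioo a b,
      (∑ μ, ∑ ν, g (γ t₁) μ ν * deriv (fun s => γ s μ) t₁
        * deriv (fun s => γ s ν) t₁)
      = (∑ μ, ∑ ν, g (γ t₂) μ ν * deriv (fun s => γ s μ) t₂
        * deriv (fun s => γ s ν) t₂) := by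
  have hlength : ∀ t ∈ Set.Ioo a b, HasDerivAt (fun s => ∑ μ, ∑ ν,
      g (γ s) μ ν * deriv (fun s => γ s μ) s * deriv (fun s => γ s ν) s) 0 t := by
    intro t ht
    have hacc : ∀ μ, HasDerivAt (deriv fun s => γ s μ) (deriv (deriv fun s => γ s μ) t) t :=
      fun μ => (hγdiff μ t ht).2.hasDerivAt
    have hderiv := hasDerivAt_sum_metric_mul_mul (fun μ ν => hgdiff μ ν _ (hγU t ht))
      (fun μ => (hγdiff μ t ht).1) hacc hacc
    rwa [sum_deriv_length_eq_zero_of_geodesic (hgsym _ (hγU t ht)) (hginv _ (hγU t ht)) _ _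
      (hgeo t ht)] at hderiv
  intro t₁ h₁ t₂ h₂
  exact isOpen_Ioo.is_const_of_deriv_eq_zero isPreconnected_Ioo
    (fun t ht => (hlength t ht).differentiableAt.differentiableWithinAt)
    (fun t ht => (hlength t ht).deriv) h₁ h₂

/-- Constancy of the length function g(γ̇, γ̇) along scale-covariant geodesics
of a Weylian metric gauge (g, φ). -/
theorem length_constant_along_scale_covariant_geodesic (n : ℕ)
    (U : Set (Euc n)) (hU : IsOpen U)
    (g : Euc n → Matrix (Fin n) (Fin n) ℝ)
    (hgsym : ∀ y ∈ U, (g y)ᵀ = g y) (hginv : ∀ y ∈ U, IsUnit (g y))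
    (hgdiff : ∀ μ ν : Fin n, ∀ y ∈ U, DifferentiableAt ℝ (fun z => g z μ ν) y)
    (φ : Fin n → Euc n → ℝ)
    (a b : ℝ) (γ : ℝ → Euc n)
    (hγU : ∀ t ∈ Set.Ioo a b, γ t ∈ U)
    (hγdiff : ∀ μ : Fin n, ∀ t ∈ Set.Ioo a b,
      DifferentiableAt ℝ (fun s => γ s μ) t ∧
      DifferentiableAt ℝ (deriv (fun s => γ s μ)) t)
    (hgeo : ∀ t ∈ Set.Ioo a b, ∀ l : Fin n,
      deriv (deriv (fun s => γ s l)) t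
        + (∑ μ, ∑ ν, weylConn g φ l μ ν (γ t)
            * deriv (fun s => γ s μ) t * deriv (fun s => γ s ν) t)
        - (∑ ν, φ ν (γ t) * deriv (fun s => γ s ν) t)
            * deriv (fun s => γ s l) t = 0) :
    ∀ t₁ ∈ Set.Ioo a b, ∀ t₂ ∈ Set.Ioo a b,
      (∑ μ, ∑ ν, g (γ t₁) μ ν * deriv (fun s => γ s μ) t₁
        * deriv (fun s => γ s ν) t₁)
      = (∑ μ, ∑ ν, g (γ t₂) μ ν * deriv (fun s => γ s μ) t₂
        * deriv (fun s => γ s ν) t₂) :=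
  length_constant_along_scale_covariant_geodesic_general n U g hgsym hginv hgdiff φ a b γ hγU hγdiff
    hgeo
end
end

section
/- Weyl's decomposition of the curvature: the failure of antisymmetry of the Weyl geometric curvature tensor in its first index pair is exactly the scale curvature. Precisely: let U ⊆ ℝⁿ be open, g : U → Matrix (Fin n) (Fin n) ℝ twice continuously differentiable with symmetric invertible values, and φ a 1-form on U with continuously differentiable components. Let Γ = Γ(g,φ) and define the curvature tensor R^μ_{νλκ}(x) = ∂_λ Γ^μ_{νκ}(x) − ∂_κ Γ^μ_{νλ}(x) + Σ_α (Γ^α_{νκ}(x) Γ^μ_{αλ}(x) − Γ^α_{νλ}(x) Γ^μ_{ακ}(x)), its fully covariant version R_{μνλκ} = Σ_α g_{μα} R^α_{νλκ}, and the scale curvature f_{λκ} = ∂_λ φ_κ − ∂_κ φ_λ. Then for every x ∈ U and all μ, ν, λ, κ: R_{μνλκ}(x) + R_{νμλκ}(x) = 2 f_{λκ}(x) g_{μν}(x). In particular, R_{μνλκ} is antisymmetric in its first two indices (as in Riemannian geometry) exactly where the scale curvature vanishes. -/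
open scoped BigOperators
open Matrix

noncomputable section

/-- The Weyl geometric curvature tensor
R^μ_{νλκ} = ∂_λ Γ^μ_{νκ} − ∂_κ Γ^μ_{νλ} + Σ_α (Γ^α_{νκ} Γ^μ_{αλ} − Γ^α_{νλ} Γ^μ_{ακ})
of the Weylian affine connection Γ = Γ(g,φ). -/
def weylCurv {n : ℕ} (g : Euc n → Matrix (Fin n) (Fin n) ℝ)
    (φ : Fin n → Euc n → ℝ) (μ ν l κ : Fin n) (x : Euc n) : ℝ :=
  pd (weylConn g φ μ ν κ) l x - pd (weylConn g φ μ ν l) κ x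
    + ∑ α, (weylConn g φ α ν κ x * weylConn g φ μ α l x
        - weylConn g φ α ν l x * weylConn g φ μ α κ x)

/-!
Lower the upper index of the connection, `Γ_{μνλ} = Σ_α g_{μα} Γ^α_{νλ}`. Weyl's connection
satisfies `Γ_{μνλ} + Γ_{νμλ} = ∂_λ g_{μν} + 2 φ_λ g_{μν}`, i.e. `∇g = -2 φ ⊗ g`. Using this to
eliminate the derivatives of `g` from `g_{μα} R^α_{νλκ}`, the quadratic terms become
`Σ g_{αβ} Γ^α_{··} Γ^β_{··}`, symmetric under exchange of the two index pairs, so they cancel in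
`R_{μνλκ} + R_{νμλκ}`. What remains is `∂_λ (∂_κ g_{μν} + 2 φ_κ g_{μν})` minus the same with
`λ, κ` exchanged, plus first-order terms; by the symmetry of second derivatives this collapses to
`2 f_{λκ} g_{μν}`.
-/

open Filter Topology

section PartialDerivative

variable {n : ℕ} {f h : Euc n → ℝ} {x : Euc n} {μ : Fin n}

lemma pd_congr_of_eventuallyEq (hfh : f =ᶠ[𝓝 x] h) : pd f μ x = pd h μ x := by
  rw [pd, pd, hfh.fderiv_eq]

lemma pd_add (hf : DifferentiableAt ℝ f x) (hh : DifferentiableAt ℝ h x) :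
    pd (fun y => f y + h y) μ x = pd f μ x + pd h μ x := by
  simp [pd, fderiv_fun_add hf hh]

lemma pd_mul (hf : DifferentiableAt ℝ f x) (hh : DifferentiableAt ℝ h x) :
    pd (fun y => f y * h y) μ x = pd f μ x * h x + f x * pd h μ x := by
  simp [pd, fderiv_fun_mul hf hh]
  ring

lemma pd_const_mul (c : ℝ) (hf : DifferentiableAt ℝ f x) :
    pd (fun y => c * f y) μ x = c * pd f μ x := by
  simp [pd, fderiv_const_mul hf]

lemma pd_sum {ι : Type*} (s : Finset ι) {F : ι → Euc n → ℝ}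
    (hF : ∀ i ∈ s, DifferentiableAt ℝ (F i) x) :
    pd (fun y => ∑ i ∈ s, F i y) μ x = ∑ i ∈ s, pd (F i) μ x := by
  simp [pd, fderiv_fun_sum hF]

lemma differentiableAt_pd (hf : ContDiffAt ℝ 2 f x) (μ : Fin n) :
    DifferentiableAt ℝ (pd f μ) x :=
  ((hf.fderiv_right (m := 1) le_rfl).clm_apply contDiffAt_const).differentiableAt one_ne_zero

lemma pd_pd_comm (hf : ContDiffAt ℝ 2 f x) (l κ : Fin n) :
    pd (pd f κ) l x = pd (pd f l) κ x := by
  have hd : DifferentiableAt ℝ (fderiv ℝ f) x :=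
    (hf.fderiv_right (m := 1) le_rfl).differentiableAt one_ne_zero
  unfold pd
  rw [fderiv_clm_apply hd (differentiableAt_const _), fderiv_clm_apply hd (differentiableAt_const _)]
  simp [hf.isSymmSndFDerivAt (by simp) (EuclideanSpace.single l 1) (EuclideanSpace.single κ 1)]

end PartialDerivative

section MatrixInverse

variable {E : Type*} [NormedAddCommGroup E] [NormedSpace ℝ E] {m : Type*} [Fintype m]
  [DecidableEq m] {M : E → Matrix m m ℝ} {x : E}

lemma differentiableAt_matrix_det (hM : ∀ i j, DifferentiableAt ℝ (fun y => M y i j) x) :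
    DifferentiableAt ℝ (fun y => (M y).det) x := by
  simp only [Matrix.det_apply']
  fun_prop

lemma differentiableAt_matrix_adjugate_apply
    (hM : ∀ i j, DifferentiableAt ℝ (fun y => M y i j) x) (i j : m) :
    DifferentiableAt ℝ (fun y => (M y).adjugate i j) x := by
  simp only [Matrix.adjugate_apply]
  refine differentiableAt_matrix_det fun k l => ?_
  by_cases hk : k = j
  · simp [hk]
  · simp [hk, hM k l]

lemma differentiableAt_matrix_inv_apply
    (hM : ∀ i j, DifferentiableAt ℝ (fun y => M y i j) x) (hMx : IsUnit (M x)) (i j : m) :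
    DifferentiableAt ℝ (fun y => (M y)⁻¹ i j) x := by
  simp only [Matrix.inv_def, Matrix.smul_apply, Ring.inverse_eq_inv', smul_eq_mul]
  exact ((differentiableAt_matrix_det hM).inv ((Matrix.isUnit_iff_isUnit_det _).1 hMx).ne_zero).mul
    (differentiableAt_matrix_adjugate_apply hM i j)

end MatrixInverse

lemma Matrix.sum_mul_sum_inv_mul {m : Type*} [Fintype m] [DecidableEq m] {A : Matrix m m ℝ}
    (hA : IsUnit A) (v : m → ℝ) (i : m) : ∑ α, A i α * ∑ β, A⁻¹ α β * v β = v i := by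
  have h := congrFun (Matrix.mulVec_mulVec v A A⁻¹) i
  rwa [Matrix.mul_nonsing_inv _ ((Matrix.isUnit_iff_isUnit_det _).1 hA), Matrix.one_mulVec] at h

section Connection

variable {n : ℕ} {g : Euc n → Matrix (Fin n) (Fin n) ℝ} {Γ : Fin n → Fin n → Fin n → Euc n → ℝ}
  {φ : Fin n → Euc n → ℝ} {x : Euc n}

def lowerConn (g : Euc n → Matrix (Fin n) (Fin n) ℝ) (Γ : Fin n → Fin n → Fin n → Euc n → ℝ)
    (μ ν l : Fin n) (x : Euc n) : ℝ :=
  ∑ α, g x μ α * Γ α ν l x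

/-- `weylCurv g φ` is `curvature (weylConn g φ)` by definition. -/
def curvature (Γ : Fin n → Fin n → Fin n → Euc n → ℝ) (μ ν l κ : Fin n) (x : Euc n) : ℝ :=
  pd (Γ μ ν κ) l x - pd (Γ μ ν l) κ x
    + ∑ α, (Γ α ν κ x * Γ μ α l x - Γ α ν l x * Γ μ α κ x)

/-- Coordinate form of Weyl's compatibility condition `∇g = -2 φ ⊗ g`. -/
def WeylCompatibleAt (g : Euc n → Matrix (Fin n) (Fin n) ℝ)
    (Γ : Fin n → Fin n → Fin n → Euc n → ℝ) (φ : Fin n → Euc n → ℝ) (x : Euc n) : Prop :=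
  ∀ μ ν l, lowerConn g Γ μ ν l x + lowerConn g Γ ν μ l x
    = pd (fun y => g y μ ν) l x + 2 * φ l x * g x μ ν

lemma differentiableAt_lowerConn (hg : ∀ a b, DifferentiableAt ℝ (fun y => g y a b) x)
    (hΓ : ∀ a b c, DifferentiableAt ℝ (Γ a b c) x) (μ ν l : Fin n) :
    DifferentiableAt ℝ (lowerConn g Γ μ ν l) x :=
  DifferentiableAt.fun_sum fun α _ => (hg μ α).mul (hΓ α ν l)

lemma sum_mul_pd_eq (hg : ∀ a b, DifferentiableAt ℝ (fun y => g y a b) x)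
    (hΓ : ∀ a b c, DifferentiableAt ℝ (Γ a b c) x) (μ ν l κ : Fin n) :
    ∑ α, g x μ α * pd (Γ α ν κ) l x
      = pd (lowerConn g Γ μ ν κ) l x - ∑ α, pd (fun y => g y μ α) l x * Γ α ν κ x := by
  unfold lowerConn
  rw [pd_sum (F := fun α y => g y μ α * Γ α ν κ y) _ fun α _ => (hg μ α).mul (hΓ α ν κ)]
  simp only [pd_mul (hg μ _) (hΓ _ ν κ), Finset.sum_add_distrib]
  ring

lemma sum_mul_sum_mul_eq (μ ν l κ : Fin n) :
    ∑ α, g x μ α * ∑ β, Γ β ν κ x * Γ α β l x = ∑ β, lowerConn g Γ μ β l x * Γ β ν κ x := by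
  simp only [lowerConn, Finset.mul_sum, Finset.sum_mul]
  rw [Finset.sum_comm]
  exact Finset.sum_congr rfl fun _ _ => Finset.sum_congr rfl fun _ _ => by ring

lemma sum_lowerConn_mul_comm (hgx : (g x)ᵀ = g x) (a b c d : Fin n) :
    ∑ β, lowerConn g Γ β a b x * Γ β c d x = ∑ β, lowerConn g Γ β c d x * Γ β a b x := by
  simp only [lowerConn, Finset.sum_mul]
  rw [Finset.sum_comm]
  refine Finset.sum_congr rfl fun α _ => Finset.sum_congr rfl fun β _ => ?_
  rw [Matrix.IsSymm.apply hgx]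
  ring

lemma sum_pd_mul_eq (hc : WeylCompatibleAt g Γ φ x) (μ ν l κ : Fin n) :
    ∑ β, pd (fun y => g y μ β) l x * Γ β ν κ x
      = ∑ β, lowerConn g Γ μ β l x * Γ β ν κ x + ∑ β, lowerConn g Γ β μ l x * Γ β ν κ x
        - 2 * φ l x * lowerConn g Γ μ ν κ x := by
  have hpd (β : Fin n) : pd (fun y => g y μ β) l x
      = lowerConn g Γ μ β l x + lowerConn g Γ β μ l x - 2 * φ l x * g x μ β := by
    linarith [hc μ β l]
  simp only [hpd, add_mul, sub_mul, Finset.sum_add_distrib, Finset.sum_sub_distrib, lowerConn,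
    Finset.mul_sum]
  congr 1
  exact Finset.sum_congr rfl fun _ _ => by ring

lemma sum_mul_curvature_eq (hg : ∀ a b, DifferentiableAt ℝ (fun y => g y a b) x)
    (hΓ : ∀ a b c, DifferentiableAt ℝ (Γ a b c) x) (hc : WeylCompatibleAt g Γ φ x)
    (μ ν l κ : Fin n) :
    ∑ α, g x μ α * curvature Γ α ν l κ x
      = pd (lowerConn g Γ μ ν κ) l x - pd (lowerConn g Γ μ ν l) κ x
        - ∑ β, lowerConn g Γ β μ l x * Γ β ν κ x + ∑ β, lowerConn g Γ β μ κ x * Γ β ν l x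
        + 2 * φ l x * lowerConn g Γ μ ν κ x - 2 * φ κ x * lowerConn g Γ μ ν l x := by
  simp only [curvature, mul_add, mul_sub, Finset.sum_add_distrib, Finset.sum_sub_distrib]
  linear_combination sum_mul_pd_eq hg hΓ μ ν l κ - sum_mul_pd_eq hg hΓ μ ν κ l
    + sum_mul_sum_mul_eq μ ν l κ - sum_mul_sum_mul_eq μ ν κ l
    - sum_pd_mul_eq hc μ ν l κ + sum_pd_mul_eq hc μ ν κ l

lemma pd_lowerConn_add_swap (hg : ∀ a b, ContDiffAt ℝ 2 (fun y => g y a b) x)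
    (hφ : ∀ a, DifferentiableAt ℝ (φ a) x) (hΓ : ∀ a b c, DifferentiableAt ℝ (Γ a b c) x)
    (hc : ∀ᶠ y in 𝓝 x, WeylCompatibleAt g Γ φ y) (μ ν l κ : Fin n) :
    pd (lowerConn g Γ μ ν κ) l x + pd (lowerConn g Γ ν μ κ) l x
      = pd (pd (fun y => g y μ ν) κ) l x + 2 * pd (φ κ) l x * g x μ ν
        + 2 * φ κ x * pd (fun y => g y μ ν) l x := by
  have hgd a b := (hg a b).differentiableAt two_ne_zero
  have h2φ : DifferentiableAt ℝ (fun y => 2 * φ κ y) x := (hφ κ).const_mul 2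
  rw [← pd_add (differentiableAt_lowerConn hgd hΓ μ ν κ) (differentiableAt_lowerConn hgd hΓ ν μ κ),
    pd_congr_of_eventuallyEq (hc.mono fun y hy => hy μ ν κ),
    pd_add (differentiableAt_pd (hg μ ν) κ) (h2φ.fun_mul (hgd μ ν)), pd_mul h2φ (hgd μ ν),
    pd_const_mul 2 (hφ κ)]
  ring

theorem sum_mul_curvature_add_swap (hgx : (g x)ᵀ = g x)
    (hg : ∀ a b, ContDiffAt ℝ 2 (fun y => g y a b) x) (hφ : ∀ a, DifferentiableAt ℝ (φ a) x)
    (hΓ : ∀ a b c, DifferentiableAt ℝ (Γ a b c) x) (hc : ∀ᶠ y in 𝓝 x, WeylCompatibleAt g Γ φ y)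
    (μ ν l κ : Fin n) :
    (∑ α, g x μ α * curvature Γ α ν l κ x) + (∑ α, g x ν α * curvature Γ α μ l κ x)
      = 2 * (pd (φ κ) l x - pd (φ l) κ x) * g x μ ν := by
  have hgd a b := (hg a b).differentiableAt two_ne_zero
  have hcx := hc.self_of_nhds
  rw [sum_mul_curvature_eq hgd hΓ hcx, sum_mul_curvature_eq hgd hΓ hcx]
  linear_combination pd_lowerConn_add_swap hg hφ hΓ hc μ ν l κ
    - pd_lowerConn_add_swap hg hφ hΓ hc μ ν κ l + pd_pd_comm (hg μ ν) l κ
    - sum_lowerConn_mul_comm hgx μ l ν κ - sum_lowerConn_mul_comm hgx ν l μ κ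
    + 2 * φ l x * hcx μ ν κ - 2 * φ κ x * hcx μ ν l

end Connection

section WeylConnection

variable {n : ℕ} {g : Euc n → Matrix (Fin n) (Fin n) ℝ} {φ : Fin n → Euc n → ℝ} {y : Euc n}

def christoffelFirst (g : Euc n → Matrix (Fin n) (Fin n) ℝ) (μ ν l : Fin n) (y : Euc n) : ℝ :=
  (1 / 2) * (pd (fun z => g z l μ) ν y + pd (fun z => g z μ ν) l y - pd (fun z => g z ν l) μ y)

lemma christoffel_eq_sum_inv_mul (μ ν l : Fin n) :
    christoffel g μ ν l y = ∑ α, (g y)⁻¹ μ α * christoffelFirst g α ν l y := by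
  rw [christoffel, Finset.mul_sum]
  exact Finset.sum_congr rfl fun _ _ => by rw [christoffelFirst]; ring

lemma christoffelFirst_add_swap (hsym : ∀ᶠ z in 𝓝 y, (g z)ᵀ = g z) (μ ν l : Fin n) :
    christoffelFirst g μ ν l y + christoffelFirst g ν μ l y = pd (fun z => g z μ ν) l y := by
  have hpd (a b c : Fin n) : pd (fun z => g z a b) c y = pd (fun z => g z b a) c y :=
    pd_congr_of_eventuallyEq (hsym.mono fun z hz => (Matrix.IsSymm.apply hz a b).symm)
  rw [christoffelFirst, christoffelFirst, hpd l μ, hpd ν l, hpd l ν, hpd ν μ]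
  ring

lemma lowerConn_weylConn (hy : IsUnit (g y)) (μ ν l : Fin n) :
    lowerConn g (weylConn g φ) μ ν l y
      = christoffelFirst g μ ν l y + g y μ ν * φ l y + g y μ l * φ ν y - g y ν l * φ μ y := by
  have hscale : ∑ α, g y μ α * (g y ν l * ∑ β, (g y)⁻¹ α β * φ β y) = g y ν l * φ μ y := by
    simp only [mul_left_comm _ (g y ν l), ← Finset.mul_sum]
    rw [Matrix.sum_mul_sum_inv_mul hy (fun β => φ β y)]
  simp only [lowerConn, weylConn, christoffel_eq_sum_inv_mul, mul_add, mul_sub,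
    Finset.sum_add_distrib, Finset.sum_sub_distrib, Matrix.sum_mul_sum_inv_mul hy, hscale]
  simp [kron]

lemma weylCompatibleAt_weylConn (hsym : ∀ᶠ z in 𝓝 y, (g z)ᵀ = g z) (hy : IsUnit (g y)) :
    WeylCompatibleAt g (weylConn g φ) φ y := by
  intro μ ν l
  rw [lowerConn_weylConn hy, lowerConn_weylConn hy, ← christoffelFirst_add_swap hsym μ ν l,
    Matrix.IsSymm.apply hsym.self_of_nhds ν μ, Matrix.IsSymm.apply hsym.self_of_nhds l ν]
  ring

lemma differentiableAt_weylConn (hg : ∀ a b, ContDiffAt ℝ 2 (fun z => g z a b) y)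
    (hy : IsUnit (g y)) (hφ : ∀ a, DifferentiableAt ℝ (φ a) y) (μ ν l : Fin n) :
    DifferentiableAt ℝ (weylConn g φ μ ν l) y := by
  have hgd a b := (hg a b).differentiableAt two_ne_zero
  have hinv := differentiableAt_matrix_inv_apply hgd hy
  have hpdg a b c := differentiableAt_pd (hg a b) c
  unfold weylConn christoffel
  refine ((((differentiableAt_const _).mul (DifferentiableAt.fun_sum fun α _ =>
    (hinv μ α).mul (((hpdg l α ν).add (hpdg α ν l)).sub (hpdg ν l α)))).add
    ((hφ l).const_mul _)).add ((hφ ν).const_mul _)).sub ?_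
  exact (hgd ν l).mul (DifferentiableAt.fun_sum fun α _ => (hinv μ α).mul (hφ α))

end WeylConnection

/-- Weyl's decomposition of the curvature: the failure of antisymmetry of the
fully covariant curvature tensor R_{μνλκ} = Σ_α g_{μα} R^α_{νλκ} in its first
index pair is exactly (twice) the scale curvature f_{λκ} = ∂_λ φ_κ − ∂_κ φ_λ:
R_{μνλκ} + R_{νμλκ} = 2 f_{λκ} g_{μν}. -/
theorem weylCurv_first_pair_antisymmetry_defect (n : ℕ)
    (U : Set (Euc n)) (hU : IsOpen U)
    (g : Euc n → Matrix (Fin n) (Fin n) ℝ)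
    (hgsym : ∀ y ∈ U, (g y)ᵀ = g y) (hginv : ∀ y ∈ U, IsUnit (g y))
    (hg : ∀ μ ν : Fin n, ContDiffOn ℝ 2 (fun y => g y μ ν) U)
    (φ : Fin n → Euc n → ℝ) (hφ : ∀ ν : Fin n, ContDiffOn ℝ 1 (φ ν) U) :
    ∀ x ∈ U, ∀ μ ν l κ : Fin n,
      (∑ α, g x μ α * weylCurv g φ α ν l κ x)
        + (∑ α, g x ν α * weylCurv g φ α μ l κ x)
      = 2 * (pd (φ κ) l x - pd (φ l) κ x) * g x μ ν := by
  intro x hx μ ν l κ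
  have hUx : U ∈ 𝓝 x := hU.mem_nhds hx
  have hgx a b : ContDiffAt ℝ 2 (fun y => g y a b) x := (hg a b).contDiffAt hUx
  have hφx a : DifferentiableAt ℝ (φ a) x :=
    ((hφ a).contDiffAt hUx).differentiableAt one_ne_zero
  have hcompat : ∀ᶠ y in 𝓝 x, WeylCompatibleAt g (weylConn g φ) φ y := by
    filter_upwards [hUx] with y hy
    exact weylCompatibleAt_weylConn (eventually_of_mem (hU.mem_nhds hy) hgsym) (hginv y hy)
  exact sum_mul_curvature_add_swap (hgsym x hx) hgx hφx
    (differentiableAt_weylConn hgx (hginv x hx) hφx) hcompat μ ν l κ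
end
end
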